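/- arXiv:2404.06755 — 6 statements merged into one kernel-verified Lean document; each statement's English description precedes it below -/
import Mathlib

section
/- Let a > 0, b < 0, p > 1, δ < 0 be real numbers, and let u : (−∞, 0) → (0, ∞) be a differentiable function satisfying u'(t) ≥ δ(a·u(t) + b·u(t)^p) for all t < 0. Then limsup_{t → −∞} u(t) ≤ (−a/b)^{1/(p−1)}. -/
open Filter Real Topology

theorem stmt_5 (a b p δ : ℝ) (ha : 0 < a) (hb : b < 0) (hp : 1 < p) (hδ : δ < 0)
    (u u' : ℝ → ℝ) (hpos : ∀ t < (0 : ℝ), 0 < u t)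
    (hderiv : ∀ t < (0 : ℝ), HasDerivAt u (u' t) t)
    (hineq : ∀ t < (0 : ℝ), u' t ≥ δ * (a * u t + b * u t ^ p)) :
    Filter.limsup u Filter.atBot ≤ (-a / b) ^ (1 / (p - 1)) := by
  set q : ℝ := 1 - p with hq
  have hqneg : q < 0 := by simp [hq]; linarith
  have hc : 0 < q * δ := mul_pos_of_neg_of_neg hqneg hδ
  set c : ℝ := q * δ with hcdef
  set k : ℝ := c * a with hkdef
  have hk : 0 < k := mul_pos hc ha
  set g : ℝ → ℝ := fun t => u t ^ q with hgdef
  set g' : ℝ → ℝ := fun t => u' t * q * u t ^ (q - 1) with hg'def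
  have hgderiv : ∀ t < (0 : ℝ), HasDerivAt g (g' t) t := fun t ht =>
    (hderiv t ht).rpow_const (Or.inl (hpos t ht).ne')
  -- key inequality for g'
  have hgineq : ∀ t < (0 : ℝ), g' t ≤ c * (a * g t + b) := by
    intro t ht
    have hu := hpos t ht
    have hcoef : q * u t ^ (q - 1) < 0 :=
      mul_neg_of_neg_of_pos hqneg (Real.rpow_pos_of_pos hu _)
    have h1 : g' t ≤ (δ * (a * u t + b * u t ^ p)) * (q * u t ^ (q - 1)) := by
      have := hineq t ht
      have := mul_le_mul_of_nonpos_right this hcoef.le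
      calc g' t = u' t * (q * u t ^ (q - 1)) := by rw [hg'def]; ring
        _ ≤ _ := this
    refine h1.trans_eq ?_
    have e1' : u t ^ (q - 1) * u t = u t ^ q := by
      have e := Real.rpow_add hu (q - 1) 1
      rw [Real.rpow_one] at e
      rw [← e]; ring_nf
    have e2 : u t ^ (q - 1) * u t ^ p = 1 := by
      rw [← Real.rpow_add hu]
      have : q - 1 + p = 0 := by rw [hq]; ring
      rw [this, Real.rpow_zero]
    calc (δ * (a * u t + b * u t ^ p)) * (q * u t ^ (q - 1))
        = q * δ * (a * (u t ^ (q - 1) * u t) + b * (u t ^ (q - 1) * u t ^ p)) := by ring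
      _ = c * (a * g t + b) := by rw [e1', e2, hcdef, hgdef]; ring
  -- the auxiliary monotone function
  set h : ℝ → ℝ := fun t => Real.exp (-k * t) * (g t + b / a) with hhdef
  have hhderiv : ∀ t < (0 : ℝ), HasDerivAt h
      (Real.exp (-k * t) * (-k) * (g t + b / a) + Real.exp (-k * t) * g' t) t := by
    intro t ht
    have he : HasDerivAt (fun t => Real.exp (-k * t)) (Real.exp (-k * t) * (-k)) t := by
      simpa using (((hasDerivAt_id t).const_mul (-k)).exp)
    exact he.mul ((hgderiv t ht).add_const (b / a))
  have hderiv_nonpos : ∀ t ∈ Set.Iio (0 : ℝ), deriv h t ≤ 0 := by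
    intro t ht
    rw [(hhderiv t ht).deriv]
    have hE : 0 < Real.exp (-k * t) := Real.exp_pos _
    have h2 : g' t - k * (g t + b / a) ≤ 0 := by
      have := hgineq t ht
      have hk2 : k * (g t + b / a) = c * (a * g t + b) := by
        rw [hkdef]; field_simp
      linarith [hk2 ▸ this]
    calc Real.exp (-k * t) * (-k) * (g t + b / a) + Real.exp (-k * t) * g' t
        = Real.exp (-k * t) * (g' t - k * (g t + b / a)) := by ring
      _ ≤ Real.exp (-k * t) * 0 := by
          exact mul_le_mul_of_nonneg_left h2 hE.le
      _ = 0 := by ring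
  have hanti : AntitoneOn h (Set.Iio (0 : ℝ)) := by
    apply antitoneOn_of_deriv_nonpos (convex_Iio 0)
    · exact fun t ht => ((hhderiv t ht).continuousAt).continuousWithinAt
    · intro t ht
      rw [interior_Iio] at ht
      exact (hhderiv t ht).differentiableAt.differentiableWithinAt
    · intro t ht
      rw [interior_Iio] at ht
      exact hderiv_nonpos t ht
  set C : ℝ := h (-1) with hCdef
  have hbound : ∀ t ≤ (-1 : ℝ), C * Real.exp (k * t) - b / a ≤ g t := by
    intro t ht
    have ht0 : t ∈ Set.Iio (0 : ℝ) := by simp; linarith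
    have h1 : C ≤ h t := hanti ht0 (by norm_num) ht
    have hE : (0 : ℝ) < Real.exp (k * t) := Real.exp_pos _
    have h2 : C * Real.exp (k * t) ≤ g t + b / a := by
      have := mul_le_mul_of_nonneg_right h1 hE.le
      calc C * Real.exp (k * t) ≤ h t * Real.exp (k * t) := this
        _ = g t + b / a := by
            rw [hhdef]
            have : Real.exp (-k * t) * Real.exp (k * t) = 1 := by
              rw [← Real.exp_add]; ring_nf; exact Real.exp_zero
            calc Real.exp (-k * t) * (g t + b / a) * Real.exp (k * t)
                = (Real.exp (-k * t) * Real.exp (k * t)) * (g t + b / a) := by ring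
              _ = g t + b / a := by rw [this, one_mul]
    linarith
  set m : ℝ → ℝ := fun t => C * Real.exp (k * t) - b / a with hmdef
  have hba : (0 : ℝ) < -(b / a) := by
    have : b / a < 0 := div_neg_of_neg_of_pos hb ha
    linarith
  have hmlim : Tendsto m atBot (𝓝 (-(b / a))) := by
    have h1 : Tendsto (fun t : ℝ => k * t) atBot atBot :=
      (tendsto_const_mul_atBot_of_pos hk).mpr tendsto_id
    have h2 : Tendsto (fun t : ℝ => C * Real.exp (k * t)) atBot (𝓝 (C * 0)) :=
      (Real.tendsto_exp_atBot.comp h1).const_mul C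
    simpa using h2.sub_const (b / a)
  -- eventual bound on u
  have hev : ∀ᶠ t in atBot, u t ≤ m t ^ (1 / q) := by
    have hev1 : ∀ᶠ t in atBot, 0 < m t := hmlim.eventually (eventually_gt_nhds hba)
    filter_upwards [hev1, eventually_le_atBot (-1 : ℝ)] with t hmt ht
    have ht0 : t < 0 := by linarith
    have hu := hpos t ht0
    have hgm : m t ≤ g t := hbound t ht
    have h1 : g t ^ (1 / q) ≤ m t ^ (1 / q) := by
      apply Real.rpow_le_rpow_of_nonpos hmt hgm
      exact le_of_lt (div_neg_of_pos_of_neg one_pos hqneg)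
    have h2 : g t ^ (1 / q) = u t := by
      rw [hgdef, ← Real.rpow_mul hu.le]
      rw [mul_one_div_cancel hqneg.ne, Real.rpow_one]
    linarith [h2 ▸ h1]
  have hlim2 : Tendsto (fun t => m t ^ (1 / q)) atBot (𝓝 ((-(b / a)) ^ (1 / q))) :=
    hmlim.rpow_const (Or.inl hba.ne')
  have hfinal : (-(b / a)) ^ (1 / q) = (-a / b) ^ (1 / (p - 1)) := by
    have h1 : (-(b / a))⁻¹ = -a / b := by
      rw [← neg_div, inv_div, div_neg, neg_div]
    have h2 : (1 / q : ℝ) = -(1 / (p - 1)) := by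
      rw [hq, show (1 : ℝ) - p = -(p - 1) by ring, div_neg]
    rw [h2, Real.rpow_neg hba.le, ← Real.inv_rpow hba.le, h1]
  calc Filter.limsup u atBot
      ≤ Filter.limsup (fun t => m t ^ (1 / q)) atBot := by
        refine Filter.limsup_le_limsup hev ?_ ?_
        · refine Filter.isCoboundedUnder_le_of_eventually_le atBot (x := 0) ?_
          filter_upwards [eventually_lt_atBot (0 : ℝ)] with t ht
          exact (hpos t ht).le
        · exact hlim2.isBoundedUnder_le
    _ = (-(b / a)) ^ (1 / q) := hlim2.limsup_eq
    _ = (-a / b) ^ (1 / (p - 1)) := hfinal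
end

section
/- Let a > 0, b < 0, p > 1, δ < 0 be real numbers, and let u : ℝ → (0, ∞) be a differentiable function satisfying u'(t) ≥ δ(a·u(t) + b·u(t)^p) for all t ∈ ℝ. Then u(t) ≤ (−a/b)^{1/(p−1)} for all t ∈ ℝ. -/
/-!
The Bernoulli substitution `z = a u^(1-p) + b` turns the inequality into the linear one
`z' ≤ k z` with `k = a (1 - p) δ > 0`, and `z > b` since `u > 0`. By the integrating factor,
`z e^(-k t)` is antitone, so a negative value `z(t₀) < 0` would force
`z(t) ≤ z(t₀) e^(k (t - t₀))` to tend to `-∞`. Hence `z ≥ 0` everywhere, which is exactly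
`u ≤ (-a/b)^(1/(p-1))`.
-/

open Real Filter

theorem nonneg_of_hasDerivAt_le_mul_of_forall_le {z z' : ℝ → ℝ} {k m : ℝ} (hk : 0 < k)
    (hz : ∀ t, HasDerivAt z (z' t) t) (hz' : ∀ t, z' t ≤ k * z t) (hm : ∀ t, m ≤ z t)
    (t : ℝ) : 0 ≤ z t := by
  have hanti : Antitone fun s => z s * exp (-k * s) := by
    refine antitone_of_hasDerivAt_nonpos
      (fun s => (hz s).mul ((hasDerivAt_id s).const_mul (-k)).exp) fun s => ?_
    have := mul_le_mul_of_nonneg_right (hz' s) (exp_pos (-k * s)).le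
    simp only [Pi.zero_apply, id, mul_one]
    linarith
  have hgrowth : ∀ s, t ≤ s → z s ≤ z t * exp (k * (s - t)) := fun s hs => by
    have h := hanti hs
    rw [show k * (s - t) = -k * t - -k * s by ring, exp_sub, mul_div_assoc',
      le_div_iff₀ (exp_pos _)]
    exact h
  by_contra! hneg
  have hbot : Tendsto (fun s => z t * exp (k * (s - t))) atTop atBot :=
    (tendsto_exp_atTop.comp ((tendsto_atTop_add_const_right _ (-t) tendsto_id).const_mul_atTop hk)
      ).const_mul_atTop_of_neg hneg
  obtain ⟨s, hs_small, hts⟩ := ((hbot.eventually_lt_atBot m).and (eventually_ge_atTop t)).exists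
  linarith [hm s, hgrowth s hts]

theorem one_sub_mul_rpow_neg_mul_le {a b p δ x y : ℝ} (hp : 1 ≤ p) (hx : 0 < x)
    (hy : δ * (a * x + b * x ^ p) ≤ y) :
    (1 - p) * x ^ (-p) * y ≤ (1 - p) * δ * (a * x ^ (1 - p) + b) :=
  calc (1 - p) * x ^ (-p) * y
      ≤ (1 - p) * x ^ (-p) * (δ * (a * x + b * x ^ p)) :=
        mul_le_mul_of_nonpos_left hy
          (mul_nonpos_of_nonpos_of_nonneg (by linarith) (rpow_pos_of_pos hx _).le)
    _ = (1 - p) * δ * (a * (x ^ (-p) * x) + b * (x ^ (-p) * x ^ p)) := by ring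
    _ = (1 - p) * δ * (a * x ^ (1 - p) + b) := by
        rw [← rpow_add_one hx.ne', ← rpow_add hx, neg_add_cancel, rpow_zero, mul_one,
          neg_add_eq_sub]

theorem le_rpow_one_div_of_nonneg {a b p x : ℝ} (ha : 0 < a) (hb : b < 0) (hp : 1 < p)
    (hx : 0 < x) (h : 0 ≤ a * x ^ (1 - p) + b) : x ≤ (-a / b) ^ (1 / (p - 1)) := by
  have hy : 0 < x ^ (p - 1) := rpow_pos_of_pos hx _
  rw [one_div, le_rpow_inv_iff_of_pos hx.le (div_nonneg_of_nonpos (by linarith) hb.le)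
    (sub_pos.2 hp), le_div_iff_of_neg hb]
  rw [← neg_sub, rpow_neg hx.le] at h
  have := mul_nonneg h hy.le
  rw [add_mul, inv_mul_cancel_right₀ hy.ne'] at this
  linarith

theorem stmt_6 (a b p δ : ℝ) (ha : 0 < a) (hb : b < 0) (hp : 1 < p) (hδ : δ < 0)
    (u u' : ℝ → ℝ) (hpos : ∀ t : ℝ, 0 < u t)
    (hderiv : ∀ t : ℝ, HasDerivAt u (u' t) t)
    (hineq : ∀ t : ℝ, u' t ≥ δ * (a * u t + b * u t ^ p)) :
    ∀ t : ℝ, u t ≤ (-a / b) ^ (1 / (p - 1)) := by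
  set z : ℝ → ℝ := fun t => a * u t ^ (1 - p) + b
  have hz : ∀ t, HasDerivAt z (a * ((1 - p) * u t ^ (-p) * u' t)) t := fun t => by
    refine ((((hderiv t).rpow_const (Or.inl (hpos t).ne')).const_mul a).add_const b).congr_deriv ?_
    rw [sub_sub_cancel_left]
    ring
  have hz' : ∀ t, a * ((1 - p) * u t ^ (-p) * u' t) ≤ a * ((1 - p) * δ) * z t := fun t =>
    (mul_le_mul_of_nonneg_left (one_sub_mul_rpow_neg_mul_le hp.le (hpos t) (hineq t))
      ha.le).trans_eq (mul_assoc _ _ _).symm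
  have hb_le : ∀ t, b ≤ z t := fun t => by
    have := mul_pos ha (rpow_pos_of_pos (hpos t) (1 - p))
    simp only [z]
    linarith
  have hk : 0 < a * ((1 - p) * δ) := mul_pos ha (mul_pos_of_neg_of_neg (by linarith) hδ)
  exact fun t => le_rpow_one_div_of_nonneg ha hb hp (hpos t)
    (nonneg_of_hasDerivAt_le_mul_of_forall_le hk hz hz' hb_le t)
end

section
/- Let a > 0, b < 0, p > 1, δ > 0 be real numbers, and let u : ℝ → (0, (−a/b)^{1/(p−1)}] be a differentiable function satisfying u'(t) ≥ δ·|a·u(t) + b·u(t)^p| for all t ∈ ℝ. Then either u(t) = (−a/b)^{1/(p−1)} for all t in some interval (t₀, ∞), or there exists c > 0 and C > 0 such that (−a/b)^{1/(p−1)} − u(t) ≤ C·e^{−ct} for all t ≥ 0. -/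
/-!
On `[0, ∞)` the reaction term `f x = a x + b x ^ p` is concave and vanishes at the equilibrium
`M = (-a / b) ^ (1 / (p - 1))`, so on `[u 0, M]` it lies above its chord
`x ↦ f (u 0) (M - x) / (M - u 0)`. Since `u` is nondecreasing and bounded by `M`, either it reaches
`M` and stays there, or `u' ≥ δ f u ≥ c (M - u)` for all `t ≥ 0`, and Grönwall's inequality
gives exponential decay of `M - u`.
-/

open Set Real

theorem le_mul_exp_of_hasDerivAt_le_mul {v v' : ℝ → ℝ} {K : ℝ}
    (hv : ∀ t, HasDerivAt v (v' t) t) (hbound : ∀ t ≥ 0, v' t ≤ K * v t) {t : ℝ} (ht : 0 ≤ t) :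
    v t ≤ v 0 * exp (K * t) := by
  have hgronwall := le_gronwallBound_of_liminf_deriv_right_le (δ := v 0) (ε := 0) (b := t)
    (fun s _ => (hv s).continuousAt.continuousWithinAt)
    (fun s _ _ hr => (hv s).hasDerivWithinAt.liminf_right_slope_le hr) le_rfl
    (fun s hs => by simpa using hbound s hs.1) t ⟨ht, le_rfl⟩
  rwa [gronwallBound_ε0, sub_zero] at hgronwall

theorem ConcaveOn.mul_div_le_of_eq_zero {s : Set ℝ} {f : ℝ → ℝ} (hf : ConcaveOn ℝ s f)
    {x y z : ℝ} (hx : x ∈ s) (hy : y ∈ s) (hfy : f y = 0) (hxy : x < y) (hxz : x ≤ z)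
    (hzy : z ≤ y) : f x * ((y - z) / (y - x)) ≤ f z := by
  have hyx : 0 < y - x := sub_pos.mpr hxy
  have hsum : (y - z) / (y - x) + (z - x) / (y - x) = 1 := by
    rw [← add_div, sub_add_sub_cancel, div_self hyx.ne']
  have hz : ((y - z) / (y - x)) • x + ((z - x) / (y - x)) • y = z := by
    simp only [smul_eq_mul]; field_simp; ring
  have hconc := hf.2 hx hy (div_nonneg (sub_nonneg.mpr hzy) hyx.le)
    (div_nonneg (sub_nonneg.mpr hxz) hyx.le) hsum
  rw [hz, hfy] at hconc
  simpa [mul_comm] using hconc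

noncomputable def fisherKPP (a b p x : ℝ) : ℝ := a * x + b * x ^ p

theorem concaveOn_fisherKPP (a : ℝ) {b p : ℝ} (hb : b ≤ 0) (hp : 1 ≤ p) :
    ConcaveOn ℝ (Ici 0) (fisherKPP a b p) := by
  have hlin : ConcaveOn ℝ (Ici (0 : ℝ)) (fun x => a * x) :=
    (LinearMap.mul ℝ ℝ a).concaveOn (convex_Ici 0)
  have hpow : ConcaveOn ℝ (Ici (0 : ℝ)) (fun x => b * x ^ p) := by
    simpa [smul_eq_mul] using ((convexOn_rpow hp).neg.smul (neg_nonneg.mpr hb))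
  exact hlin.add hpow

theorem fisherKPP_eq_mul (a b p : ℝ) {x : ℝ} (hx : x ≠ 0) :
    fisherKPP a b p x = x * (a + b * x ^ (p - 1)) := by
  rw [fisherKPP, rpow_sub_one hx]
  field_simp

theorem rpow_sub_one_equilibrium {a b p : ℝ} (hab : 0 < -a / b) (hp : p ≠ 1) :
    ((-a / b) ^ (1 / (p - 1))) ^ (p - 1) = -a / b := by
  rw [one_div, rpow_inv_rpow hab.le (sub_ne_zero.mpr hp)]

theorem fisherKPP_equilibrium {a b p : ℝ} (hab : 0 < -a / b) (hp : p ≠ 1) :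
    fisherKPP a b p ((-a / b) ^ (1 / (p - 1))) = 0 := by
  have hb : b ≠ 0 := by rintro rfl; simp at hab
  rw [fisherKPP_eq_mul a b p (rpow_pos_of_pos hab _).ne', rpow_sub_one_equilibrium hab hp]
  field_simp
  ring

theorem fisherKPP_pos {a b p x : ℝ} (hab : 0 < -a / b) (hb : b < 0) (hp : 1 < p) (hx : 0 < x)
    (hxM : x < (-a / b) ^ (1 / (p - 1))) : 0 < fisherKPP a b p x := by
  have hpow : x ^ (p - 1) < -a / b := by
    rw [← rpow_sub_one_equilibrium hab hp.ne']
    exact rpow_lt_rpow hx.le hxM (sub_pos.mpr hp)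
  have hlt : b * (-a / b) < b * x ^ (p - 1) := mul_lt_mul_of_neg_left hpow hb
  rw [mul_div_cancel₀ _ hb.ne] at hlt
  rw [fisherKPP_eq_mul a b p hx.ne']
  exact mul_pos hx (by linarith)

theorem stmt_9 (a b p δ : ℝ) (ha : 0 < a) (hb : b < 0) (hp : 1 < p) (hδ : 0 < δ)
    (u u' : ℝ → ℝ)
    (hpos : ∀ t : ℝ, 0 < u t) (hbd : ∀ t : ℝ, u t ≤ (-a / b) ^ (1 / (p - 1)))
    (hderiv : ∀ t : ℝ, HasDerivAt u (u' t) t)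
    (hineq : ∀ t : ℝ, u' t ≥ δ * |a * u t + b * u t ^ p|) :
    (∃ t₀ : ℝ, ∀ t > t₀, u t = (-a / b) ^ (1 / (p - 1))) ∨
    (∃ c > (0 : ℝ), ∃ C > (0 : ℝ), ∀ t ≥ (0 : ℝ),
      (-a / b) ^ (1 / (p - 1)) - u t ≤ C * Real.exp (-c * t)) := by
  have hab : 0 < -a / b := div_pos_of_neg_of_neg (neg_lt_zero.mpr ha) hb
  set M := (-a / b) ^ (1 / (p - 1))
  have hmono : Monotone u := monotone_of_deriv_nonneg (fun t => (hderiv t).differentiableAt)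
    fun t => (hderiv t).deriv ▸ (mul_nonneg hδ.le (abs_nonneg _)).trans (hineq t)
  by_cases hreach : ∃ t₀, u t₀ = M
  · obtain ⟨t₀, ht₀⟩ := hreach
    exact .inl ⟨t₀, fun t ht => (hbd t).antisymm (ht₀ ▸ hmono ht.le)⟩
  have hu0 : u 0 < M := (hbd 0).lt_of_ne fun h => hreach ⟨0, h⟩
  have hgap : 0 < M - u 0 := sub_pos.mpr hu0
  set c := δ * fisherKPP a b p (u 0) / (M - u 0)
  have hc : 0 < c := div_pos (mul_pos hδ (fisherKPP_pos hab hb hp (hpos 0) hu0)) hgap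
  have hlinear : ∀ t ≥ 0, c * (M - u t) ≤ u' t := fun t ht => calc
    c * (M - u t) = δ * (fisherKPP a b p (u 0) * ((M - u t) / (M - u 0))) := by
      simp only [c]; field_simp
    _ ≤ δ * fisherKPP a b p (u t) := by
      gcongr
      exact (concaveOn_fisherKPP a hb.le hp.le).mul_div_le_of_eq_zero (hpos 0).le
        (rpow_pos_of_pos hab _).le (fisherKPP_equilibrium hab hp.ne') hu0 (hmono ht) (hbd t)
    _ ≤ u' t := (mul_le_mul_of_nonneg_left (le_abs_self _) hδ.le).trans (hineq t)
  refine .inr ⟨c, hc, M - u 0, hgap, fun t ht => ?_⟩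
  exact le_mul_exp_of_hasDerivAt_le_mul (fun s => (hderiv s).const_sub M)
    (fun s hs => by linarith [hlinear s hs]) ht
end

section
/- Let a > 0, b < 0, p > 1, δ > 0, C > 0 be real numbers, and let u : (0, ∞) → (0, ∞) be a differentiable function satisfying u'(t)/u(t) ≥ δ·|a + b·u(t)^{p−1}| − C/t for all t > 0. Suppose moreover u is bounded on (0, ∞). Then lim_{t → ∞} u(t) = (−a/b)^{1/(p−1)}. -/
open Set Filter Topology

/-- Linear growth from a derivative lower bound. -/
lemma my_growth (u u' : ℝ → ℝ) (t₀ m : ℝ)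
    (hd : ∀ s, t₀ ≤ s → HasDerivAt u (u' s) s)
    (hm : ∀ s, t₀ ≤ s → m ≤ u' s) :
    ∀ s, t₀ ≤ s → u t₀ + m * (s - t₀) ≤ u s := by
  intro s hs
  set g : ℝ → ℝ := fun x => u x - m * x with hg
  have hgd : ∀ x, t₀ ≤ x → HasDerivAt g (u' x - m) x := by
    intro x hx
    have h1 : HasDerivAt (fun y : ℝ => m * y) m x := by
      simpa using (hasDerivAt_id x).const_mul m
    exact (hd x hx).sub h1
  have hmono : MonotoneOn g (Ici t₀) := by
    apply monotoneOn_of_deriv_nonneg (convex_Ici t₀)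
    · intro x hx
      exact ((hgd x hx).continuousAt).continuousWithinAt
    · intro x hx
      rw [interior_Ici] at hx
      exact (hgd x (le_of_lt hx)).differentiableAt.differentiableWithinAt
    · intro x hx
      rw [interior_Ici] at hx
      rw [(hgd x (le_of_lt hx)).deriv]
      have := hm x (le_of_lt hx)
      linarith
  have := hmono (self_mem_Ici) (mem_Ici.2 hs) hs
  simp only [hg] at this
  nlinarith

/-- Persistence above a threshold: if the derivative is positive whenever the
function equals the threshold, the function stays above the threshold. -/
lemma my_persist (u u' : ℝ → ℝ) (t₀ θ : ℝ)
    (hd : ∀ s, t₀ ≤ s → HasDerivAt u (u' s) s)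
    (hθ : ∀ s, t₀ ≤ s → u s = θ → 0 < u' s)
    (h0 : θ ≤ u t₀) : ∀ s, t₀ ≤ s → θ ≤ u s := by
  by_contra h
  push_neg at h
  obtain ⟨s₁, hs₁, hus₁⟩ := h
  have hcont : ContinuousOn u (Icc t₀ s₁) := fun x hx =>
    ((hd x hx.1).continuousAt).continuousWithinAt
  set A : Set ℝ := Icc t₀ s₁ ∩ u ⁻¹' (Ici θ) with hA
  have hA0 : t₀ ∈ A := ⟨⟨le_refl _, hs₁⟩, h0⟩
  have hAne : A.Nonempty := ⟨t₀, hA0⟩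
  have hAbdd : BddAbove A := ⟨s₁, fun x hx => hx.1.2⟩
  have hAclosed : IsClosed A :=
    hcont.preimage_isClosed_of_isClosed isClosed_Icc isClosed_Ici
  set σ := sSup A with hσ
  have hσA : σ ∈ A := hAclosed.csSup_mem hAne hAbdd
  have hσt₀ : t₀ ≤ σ := hσA.1.1
  have hσs₁ : σ ≤ s₁ := hσA.1.2
  have huσ : θ ≤ u σ := hσA.2
  have hσlt : σ < s₁ := lt_of_le_of_ne hσs₁ (by
    intro hEq
    rw [hEq] at huσ
    linarith)
  have hcontr : ∀ x, x ∈ A → x ≤ σ := fun x hx => le_csSup hAbdd hx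
  rcases eq_or_lt_of_le huσ with hEq | hLt
  · have hd' : 0 < u' σ := hθ σ hσt₀ hEq.symm
    have hslope := (hasDerivAt_iff_tendsto_slope.1 (hd σ hσt₀))
    have hev : ∀ᶠ x in 𝓝[≠] σ, 0 < slope u σ x :=
      hslope.eventually (eventually_gt_nhds hd')
    have hev' : ∀ᶠ x in 𝓝[>] σ, 0 < slope u σ x :=
      hev.filter_mono (nhdsWithin_mono σ (fun x hx => ne_of_gt hx))
    have hIoo : Ioo σ s₁ ∈ 𝓝[>] σ := Ioo_mem_nhdsGT_of_mem ⟨le_refl _, hσlt⟩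
    obtain ⟨x, hx1, hx2⟩ := (hev'.and (eventually_of_mem hIoo (fun x hx => hx))).exists
    have hxσ : σ < x := hx2.1
    have : θ ≤ u x := by
      have hsl : slope u σ x = (u x - u σ) / (x - σ) := slope_def_field u σ x
      rw [hsl] at hx1
      have h3 : 0 < u x - u σ := by
        have := (div_pos_iff.1 hx1)
        rcases this with ⟨h4, _⟩ | ⟨_, h5⟩
        · exact h4
        · linarith
      linarith [hEq.le]
    have : x ∈ A := ⟨⟨le_trans hσt₀ (le_of_lt hxσ), le_of_lt hx2.2⟩, this⟩
    exact absurd (hcontr x this) (not_le.2 hxσ)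
  · have hcσ : ContinuousAt u σ := (hd σ hσt₀).continuousAt
    have hev : ∀ᶠ x in 𝓝 σ, θ < u x := hcσ.eventually (eventually_gt_nhds hLt)
    have hev' : ∀ᶠ x in 𝓝[>] σ, θ < u x := hev.filter_mono nhdsWithin_le_nhds
    have hIoo : Ioo σ s₁ ∈ 𝓝[>] σ := Ioo_mem_nhdsGT_of_mem ⟨le_refl _, hσlt⟩
    obtain ⟨x, hx1, hx2⟩ := (hev'.and (eventually_of_mem hIoo (fun x hx => hx))).exists
    have : x ∈ A := ⟨⟨le_trans hσt₀ (le_of_lt hx2.1), le_of_lt hx2.2⟩, le_of_lt hx1⟩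
    exact absurd (hcontr x this) (not_le.2 hx2.1)

theorem stmt_10 (a b p δ C : ℝ) (ha : 0 < a) (hb : b < 0) (hp : 1 < p)
    (hδ : 0 < δ) (hC : 0 < C)
    (u u' : ℝ → ℝ) (hpos : ∀ t > (0 : ℝ), 0 < u t)
    (hderiv : ∀ t > (0 : ℝ), HasDerivAt u (u' t) t)
    (hineq : ∀ t > (0 : ℝ), u' t / u t ≥ δ * |a + b * u t ^ (p - 1)| - C / t)
    (hbdd : ∃ M : ℝ, ∀ t > (0 : ℝ), u t ≤ M) :
    Filter.Tendsto u Filter.atTop (nhds ((-a / b) ^ (1 / (p - 1)))) := by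
  obtain ⟨M, hM⟩ := hbdd
  have hq : 0 < p - 1 := by linarith
  have hab : 0 < -a / b := div_pos_of_neg_of_neg (by linarith) hb
  generalize hLdef : (-a / b) ^ (1 / (p - 1)) = L
  have hL : 0 < L := hLdef ▸ Real.rpow_pos_of_pos hab _
  have hLq : L ^ (p - 1) = -a / b := by
    rw [← hLdef, one_div, Real.rpow_inv_rpow hab.le (ne_of_gt hq)]
  have hbL : b * L ^ (p - 1) = -a := by
    rw [hLq, mul_comm, div_mul_cancel₀ _ (ne_of_lt hb)]
  rw [Metric.tendsto_atTop]
  intro ε hε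
  obtain ⟨e, he, heε⟩ : ∃ e : ℝ, 0 < e ∧ e < ε := ⟨ε / 2, by positivity, by linarith⟩
  -- Upper bound part
  obtain ⟨c₁, hc₁, hc₁eq⟩ : ∃ c, 0 < c ∧ a + b * (L + e) ^ (p - 1) = -c := by
    refine ⟨-(a + b * (L + e) ^ (p - 1)), ?_, by ring⟩
    have h1 : L ^ (p - 1) < (L + e) ^ (p - 1) :=
      Real.rpow_lt_rpow hL.le (by linarith) hq
    have h2 := mul_lt_mul_of_neg_left h1 hb
    linarith [hbL]
  obtain ⟨T₁, hT₁1, hT₁big⟩ : ∃ T : ℝ, 1 ≤ T ∧ 2 * C / (δ * c₁) ≤ T :=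
    ⟨max 1 (2 * C / (δ * c₁)), le_max_left _ _, le_max_right _ _⟩
  have hderU : ∀ s, T₁ ≤ s → L + e ≤ u s → (δ * c₁ / 2) * u s ≤ u' s := by
    intro s hs hus
    have hs0 : (0 : ℝ) < s := lt_of_lt_of_le one_pos (le_trans hT₁1 hs)
    have hu0 : 0 < u s := hpos s hs0
    have habs : c₁ ≤ |a + b * u s ^ (p - 1)| := by
      have h1 : (L + e) ^ (p - 1) ≤ u s ^ (p - 1) :=
        Real.rpow_le_rpow (by positivity) hus hq.le
      have h2 : b * u s ^ (p - 1) ≤ b * (L + e) ^ (p - 1) :=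
        mul_le_mul_of_nonpos_left h1 hb.le
      rw [abs_of_nonpos (by linarith)]
      linarith
    have hCs : C / s ≤ δ * c₁ / 2 := by
      have hT : 2 * C / (δ * c₁) ≤ s := le_trans hT₁big hs
      rw [div_le_iff₀ (by positivity : (0:ℝ) < δ * c₁)] at hT
      rw [div_le_iff₀ hs0]
      nlinarith
    have hiq := hineq s hs0
    have h4 : δ * c₁ ≤ δ * |a + b * u s ^ (p - 1)| :=
      mul_le_mul_of_nonneg_left habs hδ.le
    have h3 : δ * c₁ / 2 ≤ u' s / u s := by linarith
    calc (δ * c₁ / 2) * u s ≤ (u' s / u s) * u s :=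
          mul_le_mul_of_nonneg_right h3 hu0.le
    _ = u' s := div_mul_cancel₀ _ (ne_of_gt hu0)
  have hupper : ∀ t, T₁ ≤ t → u t < L + e := by
    intro t ht
    by_contra hcon
    push_neg at hcon
    have ht0 : (0 : ℝ) < t := lt_of_lt_of_le one_pos (le_trans hT₁1 ht)
    have hd' : ∀ s, t ≤ s → HasDerivAt u (u' s) s :=
      fun s hs => hderiv s (lt_of_lt_of_le ht0 hs)
    have hper : ∀ s, t ≤ s → L + e ≤ u s := by
      apply my_persist u u' t (L + e) hd' _ hcon
      intro s hs hus
      have h5 := hderU s (le_trans ht hs) (hus ▸ le_refl _)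
      have hu0 : 0 < u s := hpos s (lt_of_lt_of_le ht0 hs)
      have h6 : 0 < δ * c₁ / 2 * u s := by positivity
      linarith
    obtain ⟨m, hmpos, hmle⟩ : ∃ m : ℝ, 0 < m ∧ ∀ s, t ≤ s → m ≤ (δ * c₁ / 2) * u s := by
      refine ⟨(δ * c₁ / 2) * (L + e), by positivity, fun s hs => ?_⟩
      exact mul_le_mul_of_nonneg_left (hper s hs) (by positivity)
    have hm : ∀ s, t ≤ s → m ≤ u' s := fun s hs =>
      le_trans (hmle s hs) (hderU s (le_trans ht hs) (hper s hs))
    have hgr := my_growth u u' t m hd' hm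
    obtain ⟨s, hst, hsbig⟩ : ∃ s : ℝ, t ≤ s ∧ (M - u t) / m + t + 1 ≤ s :=
      ⟨max t ((M - u t) / m + t + 1), le_max_left _ _, le_max_right _ _⟩
    have h8 := hgr s hst
    have h9 := hM s (lt_of_lt_of_le ht0 hst)
    have h11 : m * ((M - u t) / m + 1) ≤ m * (s - t) :=
      mul_le_mul_of_nonneg_left (by linarith) hmpos.le
    rw [mul_add, mul_one, mul_div_cancel₀ _ (ne_of_gt hmpos)] at h11
    linarith
  -- Lower bound part
  have hlower : ∃ T, 1 ≤ T ∧ ∀ t, T ≤ t → L - e ≤ u t := by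
    by_cases hLe : L - e ≤ 0
    · exact ⟨1, le_refl _, fun t ht =>
        le_trans hLe (hpos t (lt_of_lt_of_le one_pos ht)).le⟩
    · push_neg at hLe
      obtain ⟨c₂, hc₂, hc₂eq⟩ : ∃ c, 0 < c ∧ a + b * (L - e) ^ (p - 1) = c := by
        refine ⟨a + b * (L - e) ^ (p - 1), ?_, rfl⟩
        have h1 : (L - e) ^ (p - 1) < L ^ (p - 1) :=
          Real.rpow_lt_rpow (by linarith) (by linarith) hq
        have h2 := mul_lt_mul_of_neg_left h1 hb
        linarith [hbL]
      obtain ⟨T₂, hT₂1, hT₂big⟩ : ∃ T : ℝ, 1 ≤ T ∧ 2 * C / (δ * c₂) ≤ T :=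
        ⟨max 1 (2 * C / (δ * c₂)), le_max_left _ _, le_max_right _ _⟩
      have hT₂0 : (0 : ℝ) < T₂ := lt_of_lt_of_le one_pos hT₂1
      have hderL : ∀ s, T₂ ≤ s → u s ≤ L - e → (δ * c₂ / 2) * u s ≤ u' s := by
        intro s hs hus
        have hs0 : (0 : ℝ) < s := lt_of_lt_of_le hT₂0 hs
        have hu0 : 0 < u s := hpos s hs0
        have habs : c₂ ≤ |a + b * u s ^ (p - 1)| := by
          have h1 : u s ^ (p - 1) ≤ (L - e) ^ (p - 1) :=
            Real.rpow_le_rpow hu0.le hus hq.le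
          have h2 : b * (L - e) ^ (p - 1) ≤ b * u s ^ (p - 1) :=
            mul_le_mul_of_nonpos_left h1 hb.le
          rw [abs_of_nonneg (by linarith)]
          linarith
        have hCs : C / s ≤ δ * c₂ / 2 := by
          have hT : 2 * C / (δ * c₂) ≤ s := le_trans hT₂big hs
          rw [div_le_iff₀ (by positivity : (0:ℝ) < δ * c₂)] at hT
          rw [div_le_iff₀ hs0]
          nlinarith
        have hiq := hineq s hs0
        have h4 : δ * c₂ ≤ δ * |a + b * u s ^ (p - 1)| :=
          mul_le_mul_of_nonneg_left habs hδ.le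
        have h3 : δ * c₂ / 2 ≤ u' s / u s := by linarith
        calc (δ * c₂ / 2) * u s ≤ (u' s / u s) * u s :=
              mul_le_mul_of_nonneg_right h3 hu0.le
        _ = u' s := div_mul_cancel₀ _ (ne_of_gt hu0)
      have hd' : ∀ s, T₂ ≤ s → HasDerivAt u (u' s) s :=
        fun s hs => hderiv s (lt_of_lt_of_le hT₂0 hs)
      have hcross : ∃ t₁, T₂ ≤ t₁ ∧ L - e ≤ u t₁ := by
        by_contra hcon
        push_neg at hcon
        have hm0 : ∀ s, T₂ ≤ s → (0:ℝ) ≤ u' s := by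
          intro s hs
          have h5 := hderL s hs (hcon s hs).le
          have hu0 : 0 < u s := hpos s (lt_of_lt_of_le hT₂0 hs)
          have h6 : 0 < δ * c₂ / 2 * u s := by positivity
          linarith
        have hgr0 := my_growth u u' T₂ 0 hd' hm0
        have huT₂ : 0 < u T₂ := hpos T₂ hT₂0
        obtain ⟨m', hm'pos, hm'eq⟩ : ∃ m' : ℝ, 0 < m' ∧ m' = (δ * c₂ / 2) * u T₂ :=
          ⟨(δ * c₂ / 2) * u T₂, by positivity, rfl⟩
        have hm' : ∀ s, T₂ ≤ s → m' ≤ u' s := by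
          intro s hs
          have h6 := hderL s hs (hcon s hs).le
          have h7 := hgr0 s hs
          have h8 : (δ * c₂ / 2) * u T₂ ≤ (δ * c₂ / 2) * u s :=
            mul_le_mul_of_nonneg_left (by linarith) (by positivity)
          linarith [hm'eq]
        have hgr := my_growth u u' T₂ m' hd' hm'
        obtain ⟨s, hst, hsbig⟩ : ∃ s : ℝ, T₂ ≤ s ∧ (L - e - u T₂) / m' + T₂ + 1 ≤ s :=
          ⟨max T₂ ((L - e - u T₂) / m' + T₂ + 1), le_max_left _ _, le_max_right _ _⟩
        have h8 := hgr s hst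
        have h9 := hcon s hst
        have h11 : m' * ((L - e - u T₂) / m' + 1) ≤ m' * (s - T₂) :=
          mul_le_mul_of_nonneg_left (by linarith) hm'pos.le
        rw [mul_add, mul_one, mul_div_cancel₀ _ (ne_of_gt hm'pos)] at h11
        linarith
      obtain ⟨t₁, ht₁, hut₁⟩ := hcross
      have ht₁0 : (0 : ℝ) < t₁ := lt_of_lt_of_le hT₂0 ht₁
      have hd'' : ∀ s, t₁ ≤ s → HasDerivAt u (u' s) s :=
        fun s hs => hderiv s (lt_of_lt_of_le ht₁0 hs)
      have hper : ∀ s, t₁ ≤ s → L - e ≤ u s := by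
        apply my_persist u u' t₁ (L - e) hd'' _ hut₁
        intro s hs hus
        have h5 := hderL s (le_trans ht₁ hs) (le_of_eq hus)
        have hu0 : 0 < u s := hpos s (lt_of_lt_of_le ht₁0 hs)
        have h6 : 0 < δ * c₂ / 2 * u s := by positivity
        linarith
      exact ⟨t₁, le_trans hT₂1 ht₁, hper⟩
  obtain ⟨T₂', hT₂'1, hlow⟩ := hlower
  refine ⟨max T₁ T₂', fun t ht => ?_⟩
  have h1 := hupper t (le_trans (le_max_left _ _) ht)
  have h2 := hlow t (le_trans (le_max_right _ _) ht)
  rw [Real.dist_eq, abs_lt]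
  constructor <;> linarith
end

section
/- Let a > 0, b < 0, p > 1, δ > 0, C > 0, ε > 0 be real numbers, and suppose w : [t₀, T) → (0, ∞) is the maximal solution of the Cauchy problem w'(t) = δ·|a·w(t) + b·w(t)^p| − C·w(t)/t with w(t₀) > (−a/b)^{1/(p−1)} + ε, where t₀ > 0 is large enough that δ·|a·x + b·x^p|/x − C/t₀ > 0 for all x ≥ (−a/b)^{1/(p−1)} + ε. Then w is increasing on [t₀, T) and T < ∞, i.e., w blows up in finite time. -/
/-!
While `w ≥ M := (-a/b)^(1/(p-1)) + ε`, the choice of `t₀` makes the right-hand side positive, so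
`w` can never fall back to the level `M` and is strictly increasing. If the solution were global
and stayed below some `X`, the positive minimum of the right-hand side over `[w t₀, X]` would
make `w` grow linearly; so `w` is unbounded, and once `w` is large,
`|a w + b w^p| ≥ -b w^p - a w` gives `w' ≥ c w^p` with `c > 0`, so `-w^(1-p)`
grows linearly while staying negative, which is absurd.
-/

open Set Filter

lemma not_bddAbove_image_Ici_of_pos_le_deriv {f f' : ℝ → ℝ} {m t₀ : ℝ}
    (hf : ∀ t ≥ t₀, HasDerivAt f (f' t) t) (hm : 0 < m) (hle : ∀ t ≥ t₀, m ≤ f' t) :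
    ¬ BddAbove (f '' Ici t₀) := by
  rintro ⟨X, hX⟩
  have hgrowth : ∀ t ≥ t₀, m * (t - t₀) ≤ f t - f t₀ := fun t ht =>
    (convex_Ici t₀).mul_sub_le_image_sub_of_le_deriv
      (fun s hs => (hf s hs).continuousAt.continuousWithinAt)
      (fun s hs => (hf s (interior_subset hs)).differentiableAt.differentiableWithinAt)
      (fun s hs => (hf s (interior_subset hs)).deriv ▸ hle s (interior_subset hs))
      t₀ self_mem_Ici t ht ht
  set t := t₀ + (X - f t₀) / m + 1
  have ht : t₀ ≤ t := by
    have : 0 ≤ (X - f t₀) / m := div_nonneg (by linarith [hX ⟨t₀, self_mem_Ici, rfl⟩]) hm.le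
    linarith
  have hmt : m * (t - t₀) = X - f t₀ + m := by simp only [t]; field_simp; ring
  linarith [hgrowth t ht, hX ⟨t, ht, rfl⟩]

lemma le_image_of_deriv_pos_boundary {w w' : ℝ → ℝ} {M a b : ℝ}
    (hw : ∀ t ∈ Icc a b, HasDerivAt w (w' t) t) (ha : M ≤ w a)
    (bound : ∀ t ∈ Ico a b, w t = M → 0 < w' t) : ∀ ⦃t⦄, t ∈ Icc a b → M ≤ w t :=
  image_le_of_deriv_right_lt_deriv_boundary' continuousOn_const
    (fun _ _ => hasDerivWithinAt_const _ _ _) ha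
    (fun t ht => (hw t ht).continuousAt.continuousWithinAt)
    (fun t ht => (hw t (Ico_subset_Icc_self ht)).hasDerivWithinAt)
    (fun t ht h => bound t ht h.symm)

lemma strictMonoOn_of_deriv_pos_of_le {w w' : ℝ → ℝ} {I : Set ℝ} {t₀ M : ℝ}
    (hI : ∀ t ∈ I, t₀ ≤ t ∧ Icc t₀ t ⊆ I) (hw : ∀ t ∈ I, HasDerivAt w (w' t) t)
    (hM : M ≤ w t₀) (hpos : ∀ t ∈ I, M ≤ w t → 0 < w' t) : StrictMonoOn w I := by
  have hle : ∀ t ∈ I, M ≤ w t := fun t ht =>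
    le_image_of_deriv_pos_boundary (fun s hs => hw s ((hI t ht).2 hs)) hM
      (fun s hs h => hpos s ((hI t ht).2 (Ico_subset_Icc_self hs)) h.ge) ⟨(hI t ht).1, le_rfl⟩
  have hconv : Convex ℝ I :=
    (OrdConnected.mk fun _ hx _ hy _ hz => (hI _ hy).2 ⟨(hI _ hx).1.trans hz.1, hz.2⟩).convex
  refine strictMonoOn_of_deriv_pos hconv (fun t ht => (hw t ht).continuousAt.continuousWithinAt)
    fun t ht => ?_
  rw [(hw t (interior_subset ht)).deriv]
  exact hpos t (interior_subset ht) (hle t (interior_subset ht))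

lemma not_bddAbove_image_Ici_of_le_deriv {w w' G : ℝ → ℝ} {t₀ : ℝ}
    (hw : ∀ t ≥ t₀, HasDerivAt w (w' t) t) (hmono : MonotoneOn w (Ici t₀))
    (hG : ContinuousOn G (Ici (w t₀))) (hGpos : ∀ x ≥ w t₀, 0 < G x)
    (hle : ∀ t ≥ t₀, G (w t) ≤ w' t) : ¬ BddAbove (w '' Ici t₀) := by
  rintro ⟨X, hX⟩
  have hwX : ∀ t ≥ t₀, w t ∈ Icc (w t₀) X := fun t ht =>
    ⟨hmono self_mem_Ici ht ht, hX ⟨t, ht, rfl⟩⟩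
  obtain ⟨x₀, hx₀, hmin⟩ := isCompact_Icc.exists_isMinOn (nonempty_of_mem (hwX t₀ le_rfl))
    (hG.mono Icc_subset_Ici_self)
  refine not_bddAbove_image_Ici_of_pos_le_deriv hw (hGpos x₀ hx₀.1)
    (fun t ht => (hmin (hwX t ht)).trans (hle t ht)) ⟨X, hX⟩

lemma false_of_mul_rpow_le_deriv {w w' : ℝ → ℝ} {c p t₀ : ℝ} (hc : 0 < c) (hp : 1 < p)
    (hw : ∀ t ≥ t₀, 0 < w t ∧ HasDerivAt w (w' t) t ∧ c * w t ^ p ≤ w' t) : False := by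
  have hderiv : ∀ t ≥ t₀, HasDerivAt (fun s => -w s ^ (1 - p))
      (-(w' t * (1 - p) * w t ^ (1 - p - 1))) t := fun t ht =>
    ((hw t ht).2.1.rpow_const (Or.inl (hw t ht).1.ne')).neg
  have hle : ∀ t ≥ t₀, (p - 1) * c ≤ -(w' t * (1 - p) * w t ^ (1 - p - 1)) := by
    intro t ht
    obtain ⟨hpos, -, hlow⟩ := hw t ht
    have hcancel : w t ^ p * w t ^ (1 - p - 1) = 1 := by
      rw [← Real.rpow_add hpos]; norm_num
    have := mul_le_mul_of_nonneg_left hlow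
      (mul_nonneg (sub_nonneg.2 hp.le) (Real.rpow_pos_of_pos hpos (1 - p - 1)).le)
    linear_combination this - (p - 1) * c * hcancel
  refine not_bddAbove_image_Ici_of_pos_le_deriv hderiv (mul_pos (sub_pos.2 hp) hc) hle ⟨0, ?_⟩
  rintro _ ⟨t, ht, rfl⟩
  exact neg_nonpos.2 (Real.rpow_pos_of_pos (hw t ht).1 _).le

lemma eventually_half_mul_rpow_le {c p : ℝ} (hc : 0 < c) (hp : 1 < p) (K : ℝ) :
    ∀ᶠ x in atTop, c / 2 * x ^ p ≤ c * x ^ p - K * x := by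
  filter_upwards [(tendsto_rpow_atTop (sub_pos.2 hp)).eventually_ge_atTop (2 * K / c),
    eventually_gt_atTop 0] with x hxp hx
  have hsplit : x ^ p = x ^ (p - 1) * x := by
    rw [← Real.rpow_add_one hx.ne']; ring_nf
  have : 2 * K ≤ c * x ^ (p - 1) := by rwa [div_le_iff₀' hc] at hxp
  rw [hsplit]
  nlinarith

lemma mul_rpow_sub_mul_le {a b p δ : ℝ} (hδ : 0 ≤ δ) (C t₀ x : ℝ) :
    -(δ * b) * x ^ p - (δ * a + C / t₀) * x ≤ δ * |a * x + b * x ^ p| - C * x / t₀ := by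
  have := mul_le_mul_of_nonneg_left (neg_le_abs (a * x + b * x ^ p)) hδ
  linarith [show C * x / t₀ = C / t₀ * x by ring]

theorem stmt_11_general (a b p δ C ε t₀ : ℝ) (T : EReal)
    (hb : b < 0) (hp : 1 < p) (hδ : 0 < δ) (hC : 0 < C)
    (ht₀ : 0 < t₀)
    (w : ℝ → ℝ)
    (hsol : ∀ t : ℝ, t₀ ≤ t → (t : EReal) < T →
      0 < w t ∧ HasDerivAt w (δ * |a * w t + b * w t ^ p| - C * w t / t) t)
    (hinit : w t₀ > (-a / b) ^ (1 / (p - 1)) + ε)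
    (hlarge : ∀ x : ℝ, x ≥ (-a / b) ^ (1 / (p - 1)) + ε →
      δ * |a * x + b * x ^ p| / x - C / t₀ > 0) :
    StrictMonoOn w {t : ℝ | t₀ ≤ t ∧ (t : EReal) < T} ∧ T < ⊤ := by
  set M := (-a / b) ^ (1 / (p - 1)) + ε
  set G : ℝ → ℝ := fun x => δ * |a * x + b * x ^ p| - C * x / t₀
  have hGF : ∀ t ≥ t₀, ∀ x ≥ 0, G x ≤ δ * |a * x + b * x ^ p| - C * x / t := fun t ht x hx =>
    sub_le_sub_left (div_le_div_of_nonneg_left (mul_nonneg hC.le hx) ht₀ ht) _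
  have hGpos : ∀ x ≥ M, 0 < x → 0 < G x := fun x hx hx₀ => by
    have := mul_pos hx₀ (hlarge x hx)
    rwa [mul_sub, mul_div_cancel₀ _ hx₀.ne', ← mul_div_assoc, mul_comm x C] at this
  have hmono : StrictMonoOn w {t : ℝ | t₀ ≤ t ∧ (t : EReal) < T} := by
    refine strictMonoOn_of_deriv_pos_of_le (fun t ht => ⟨ht.1, fun s hs =>
      ⟨hs.1, (EReal.coe_le_coe_iff.2 hs.2).trans_lt ht.2⟩⟩) (fun t ht => (hsol t ht.1 ht.2).2)
      hinit.le fun t ht hM => ?_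
    obtain ⟨hpos, -⟩ := hsol t ht.1 ht.2
    exact (hGpos _ hM hpos).trans_le (hGF t ht.1 _ hpos.le)
  refine ⟨hmono, lt_top_iff_ne_top.2 fun hT => ?_⟩
  have hI : {t : ℝ | t₀ ≤ t ∧ (t : EReal) < T} = Ici t₀ := by ext t; simp [hT]
  rw [hI] at hmono
  have hglob : ∀ t ≥ t₀, 0 < w t ∧ HasDerivAt w (δ * |a * w t + b * w t ^ p| - C * w t / t) t :=
    fun t ht => hsol t ht (hT ▸ EReal.coe_lt_top t)
  have hunbdd : ¬ BddAbove (w '' Ici t₀) := not_bddAbove_image_Ici_of_le_deriv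
    (fun t ht => (hglob t ht).2) hmono.monotoneOn
    (by have := Real.continuous_rpow_const (zero_le_one.trans hp.le); fun_prop)
    (fun x hx => hGpos x (hinit.le.trans hx) ((hglob t₀ le_rfl).1.trans_le hx))
    (fun t ht => hGF t ht _ (hglob t ht).1.le)
  have hc : 0 < -(δ * b) := neg_pos.2 (mul_neg_of_pos_of_neg hδ hb)
  obtain ⟨X, hX⟩ := eventually_atTop.1 ((eventually_half_mul_rpow_le hc hp (δ * a + C / t₀)).mono
    fun x hx => hx.trans (mul_rpow_sub_mul_le hδ.le C t₀ x))
  obtain ⟨_, ⟨t₁, ht₁, rfl⟩, hXt₁⟩ := not_bddAbove_iff.1 hunbdd X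
  refine false_of_mul_rpow_le_deriv (w := w)
    (w' := fun t => δ * |a * w t + b * w t ^ p| - C * w t / t) (half_pos hc) hp (t₀ := t₁)
    fun t ht => ?_
  have ht₀t : t₀ ≤ t := le_trans ht₁ ht
  obtain ⟨hpos, hder⟩ := hglob t ht₀t
  exact ⟨hpos, hder,
    (hX _ (hXt₁.le.trans (hmono.monotoneOn ht₁ ht₀t ht))).trans (hGF t ht₀t _ hpos.le)⟩

theorem stmt_11 (a b p δ C ε t₀ : ℝ) (T : EReal)
    (ha : 0 < a) (hb : b < 0) (hp : 1 < p) (hδ : 0 < δ) (hC : 0 < C) (hε : 0 < ε)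
    (ht₀ : 0 < t₀) (hT : (t₀ : EReal) < T)
    (w : ℝ → ℝ)
    (hsol : ∀ t : ℝ, t₀ ≤ t → (t : EReal) < T →
      0 < w t ∧ HasDerivAt w (δ * |a * w t + b * w t ^ p| - C * w t / t) t)
    (hinit : w t₀ > (-a / b) ^ (1 / (p - 1)) + ε)
    (hlarge : ∀ x : ℝ, x ≥ (-a / b) ^ (1 / (p - 1)) + ε →
      δ * |a * x + b * x ^ p| / x - C / t₀ > 0)
    (hmax : ∀ T' : EReal, T < T' →
      ¬ ∃ v : ℝ → ℝ, (∀ t : ℝ, t₀ ≤ t → (t : EReal) < T' →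
          0 < v t ∧ HasDerivAt v (δ * |a * v t + b * v t ^ p| - C * v t / t) t) ∧
        ∀ t : ℝ, t₀ ≤ t → (t : EReal) < T → v t = w t) :
    StrictMonoOn w {t : ℝ | t₀ ≤ t ∧ (t : EReal) < T} ∧ T < ⊤ :=
  stmt_11_general a b p δ C ε t₀ T hb hp hδ hC ht₀ w hsol hinit hlarge
end

section
/- Let a > 0, b < 0, p > 1, δ > 0, and let u : (−∞, 0) → (0, ∞) be differentiable with u'(t) ≥ δ·|a·u(t) + b·u(t)^p| for all t < 0 and limsup_{t→−∞} u(t) ≤ (−a/b)^{1/(p−1)}. Then either lim_{t→−∞} u(t) = (−a/b)^{1/(p−1)}, or there exist c > 0 and C > 0 such that u(t) ≤ C·e^{ct} for all sufficiently negative t. -/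
/-!
Since `u' ≥ 0`, `u` is increasing, so it has a limit `m ≤ L := (-a/b)^(1/(p-1))` at `-∞`.
If `m < L`, then `u` stays below some `M < L` for very negative `t`, where
`|a u + b u^p| = u (a + b u^(p-1)) ≥ (a + b M^(p-1)) u` with `a + b M^(p-1) > 0`.
So `u' ≥ c u` there, i.e. `u e^{-ct}` is increasing, which is the exponential bound.
-/

open Filter Set Real Topology

theorem monotoneOn_of_hasDerivAt_nonneg {s : Set ℝ} (hs : Convex ℝ s) {f f' : ℝ → ℝ}
    (hf : ∀ x ∈ s, HasDerivAt f (f' x) x) (hf' : ∀ x ∈ s, 0 ≤ f' x) : MonotoneOn f s :=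
  monotoneOn_of_hasDerivWithinAt_nonneg hs
    (fun x hx => (hf x hx).continuousAt.continuousWithinAt)
    (fun x hx => (hf x (interior_subset hx)).hasDerivWithinAt)
    (fun x hx => hf' x (interior_subset hx))

theorem MonotoneOn.exists_tendsto_atBot {α β : Type*} [LinearOrder α] [NoMinOrder α]
    [ConditionallyCompleteLinearOrder β] [TopologicalSpace β] [OrderTopology β]
    {f : α → β} {a : α} (hf : MonotoneOn f (Iio a)) (hbdd : BddBelow (f '' Iio a)) :
    ∃ m, Tendsto f atBot (𝓝 m) := by
  obtain ⟨b, hb⟩ := exists_lt a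
  have hmem : ∀ t, min t b ∈ Iio a := fun t => (min_le_right t b).trans_lt hb
  have hg : Monotone fun t => f (min t b) := fun s t hst =>
    hf (hmem s) (hmem t) (min_le_min_right b hst)
  have hgbdd : BddBelow (range fun t => f (min t b)) :=
    hbdd.mono (range_subset_iff.2 fun t => mem_image_of_mem f (hmem t))
  refine ⟨_, (tendsto_atBot_ciInf hg hgbdd).congr' ?_⟩
  filter_upwards [eventually_le_atBot b] with t ht
  rw [min_eq_left ht]

theorem le_mul_exp_of_mul_le_deriv {f f' : ℝ → ℝ} {c t₁ : ℝ}
    (hf : ∀ t ≤ t₁, HasDerivAt f (f' t) t) (hle : ∀ t ≤ t₁, c * f t ≤ f' t) :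
    ∀ t ≤ t₁, f t ≤ f t₁ * exp (-(c * t₁)) * exp (c * t) := by
  have hg : MonotoneOn (fun t => f t * exp (-(c * t))) (Iic t₁) := by
    refine monotoneOn_of_hasDerivAt_nonneg (convex_Iic t₁)
      (fun t ht => (hf t ht).mul (((hasDerivAt_id t).const_mul c).neg.exp)) fun t ht => ?_
    show 0 ≤ f' t * exp (-(c * t)) + f t * (exp (-(c * t)) * -(c * 1))
    nlinarith [mul_nonneg (sub_nonneg.2 (hle t ht)) (exp_pos (-(c * t))).le]
  intro t ht
  calc f t = f t * exp (-(c * t)) * exp (c * t) := by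
        rw [mul_assoc, ← exp_add, neg_add_cancel, exp_zero, mul_one]
    _ ≤ f t₁ * exp (-(c * t₁)) * exp (c * t) :=
        mul_le_mul_of_nonneg_right (hg ht self_mem_Iic ht) (exp_pos _).le

theorem add_mul_rpow_sub_one_pos {a b p y : ℝ} (ha : 0 ≤ a) (hb : b < 0) (hp : 1 < p)
    (hy₀ : 0 ≤ y) (hy : y < (-a / b) ^ (1 / (p - 1))) : 0 < a + b * y ^ (p - 1) := by
  have hab : 0 ≤ -a / b := div_nonneg_of_nonpos (neg_nonpos.2 ha) hb.le
  rw [one_div, lt_rpow_inv_iff_of_pos hy₀ hab (sub_pos.2 hp)] at hy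
  have := mul_lt_mul_of_neg_left hy hb
  rw [mul_div_cancel₀ _ hb.ne] at this
  linarith

theorem mul_add_mul_rpow_le_abs {a b p x y : ℝ} (hb : b ≤ 0) (hp : 1 ≤ p) (hx : 0 < x)
    (hxy : x ≤ y) : x * (a + b * y ^ (p - 1)) ≤ |a * x + b * x ^ p| := by
  have hsplit : a * x + b * x ^ p = x * (a + b * x ^ (p - 1)) := by
    rw [mul_add, ← mul_assoc, mul_comm x b, mul_assoc, ← rpow_one_add' hx.le (by linarith)]
    ring_nf
  have hmono : b * y ^ (p - 1) ≤ b * x ^ (p - 1) :=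
    mul_le_mul_of_nonpos_left (rpow_le_rpow hx.le hxy (sub_nonneg.2 hp)) hb
  rw [hsplit]
  exact (mul_le_mul_of_nonneg_left (by linarith) hx.le).trans (le_abs_self _)

theorem stmt_17 (a b p δ : ℝ) (ha : 0 < a) (hb : b < 0) (hp : 1 < p) (hδ : 0 < δ)
    (u u' : ℝ → ℝ) (hpos : ∀ t < (0 : ℝ), 0 < u t)
    (hderiv : ∀ t < (0 : ℝ), HasDerivAt u (u' t) t)
    (hineq : ∀ t < (0 : ℝ), u' t ≥ δ * |a * u t + b * u t ^ p|)
    (hlimsup : Filter.limsup u Filter.atBot ≤ (-a / b) ^ (1 / (p - 1))) :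
    Filter.Tendsto u Filter.atBot (nhds ((-a / b) ^ (1 / (p - 1)))) ∨
    (∃ c > (0 : ℝ), ∃ C > (0 : ℝ), ∃ t₁ : ℝ, ∀ t ≤ t₁, u t ≤ C * Real.exp (c * t)) := by
  have hmono : MonotoneOn u (Iio 0) := monotoneOn_of_hasDerivAt_nonneg (convex_Iio 0) hderiv
    fun t ht => (mul_nonneg hδ.le (abs_nonneg _)).trans (hineq t ht)
  obtain ⟨m, hm⟩ := hmono.exists_tendsto_atBot ⟨0, forall_mem_image.2 fun t ht => (hpos t ht).le⟩
  rcases (hm.limsup_eq ▸ hlimsup).eq_or_lt with rfl | hmL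
  · exact Or.inl hm
  right
  have hm₀ : 0 ≤ m := ge_of_tendsto hm <| (eventually_lt_atBot 0).mono fun t ht => (hpos t ht).le
  obtain ⟨M, hmM, hML⟩ := exists_between hmL
  obtain ⟨t₁, ht₁⟩ := eventually_atBot.1 <|
    (hm.eventually_lt_const hmM).and (eventually_lt_atBot 0)
  have hc : 0 < δ * (a + b * M ^ (p - 1)) :=
    mul_pos hδ (add_mul_rpow_sub_one_pos ha.le hb hp (hm₀.trans hmM.le) hML)
  have hgrowth : ∀ t ≤ t₁, δ * (a + b * M ^ (p - 1)) * u t ≤ u' t := fun t ht => calc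
    _ = δ * (u t * (a + b * M ^ (p - 1))) := by ring
    _ ≤ δ * |a * u t + b * u t ^ p| := mul_le_mul_of_nonneg_left
        (mul_add_mul_rpow_le_abs hb.le hp.le (hpos t (ht₁ t ht).2) (ht₁ t ht).1.le) hδ.le
    _ ≤ u' t := hineq t (ht₁ t ht).2
  exact ⟨_, hc, _, mul_pos (hpos t₁ (ht₁ t₁ le_rfl).2) (exp_pos _), t₁,
    le_mul_exp_of_mul_le_deriv (fun t ht => hderiv t (ht₁ t ht).2) hgrowth⟩
end
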